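/- For H ∈ (1/2, 1), T > 0, and 0 < s < t ≤ T, with R^Y(t,s) = H∫₀^{s∧t}((s∧t)−a)^{−1/2}(((s∨t)+a)^{2H−1} − ((s∨t)−a)^{2H−1})da, one has R^Y(t,t) − 2R^Y(t,s) + R^Y(s,s) ≤ C·(t−s)^{1/2} for a constant C depending only on H and T. -/

import Mathlib

open MeasureTheory

noncomputable def RY (H t s : ℝ) : ℝ :=
  H * ∫ a in (0:ℝ)..(min s t),
    (min s t - a) ^ (-(1:ℝ)/2) * ((max s t + a) ^ (2*H - 1) - (max s t - a) ^ (2*H - 1))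

/-!
After the substitution `a = min s t - b` every `R^Y(t, s)` becomes an integral over `[0, s]` of
`b^{-1/2}` times a difference of `(2H-1)`-th powers. In the second difference the integral of
`R^Y(t, t)` over `[s, t]` is at most `(2T)^{2H-1} ∫_s^t b^{-1/2} db ≤ 2 (2T)^{2H-1} (t - s)^{1/2}`.
On `[0, s]` the three integrands combine into differences `x^{2H-1} - y^{2H-1}` with `x - y = t - s`
and `y ≥ b`; bounding each by the geometric mean `(x - y)^H y^{H-1}` of the Hölder bound
`(x - y)^{2H-1}` and the mean-value bound `y^{2H-2} (x - y)` leaves `3 (t - s)^H b^{H-3/2}`,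
whose integral is `O((t - s)^H) = O((t - s)^{1/2})`.
-/

open Real intervalIntegral

lemma rpow_sub_rpow_le_rpow_sub {p x y : ℝ} (hy : 0 ≤ y) (hyx : y ≤ x) (hp0 : 0 ≤ p)
    (hp1 : p ≤ 1) : x ^ p - y ^ p ≤ (x - y) ^ p := by
  have h := rpow_add_le_add_rpow hy (sub_nonneg.2 hyx) hp0 hp1
  rw [add_sub_cancel] at h
  linarith

lemma rpow_sub_rpow_le_mul_sub {p x y : ℝ} (hy : 0 < y) (hyx : y ≤ x) (hp0 : 0 ≤ p)
    (hp1 : p ≤ 1) : x ^ p - y ^ p ≤ p * y ^ (p - 1) * (x - y) := by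
  have hx : x = y * (1 + (x - y) / y) := by field_simp; ring
  have hr : 0 ≤ (x - y) / y := div_nonneg (sub_nonneg.2 hyx) hy.le
  have bernoulli := rpow_one_add_le_one_add_mul_self (by linarith : -1 ≤ (x - y) / y) hp0 hp1
  calc x ^ p - y ^ p = y ^ p * (1 + (x - y) / y) ^ p - y ^ p := by
        rw [← mul_rpow hy.le (by linarith), ← hx]
    _ ≤ y ^ p * (1 + p * ((x - y) / y)) - y ^ p := by gcongr
    _ = p * y ^ (p - 1) * (x - y) := by rw [rpow_sub_one hy.ne']; field_simp; ring

lemma rpow_two_mul_sub_one_sub_rpow_le {q x y : ℝ} (hy : 0 < y) (hyx : y ≤ x) (hq0 : 1 / 2 ≤ q)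
    (hq1 : q ≤ 1) : x ^ (2 * q - 1) - y ^ (2 * q - 1) ≤ (x - y) ^ q * y ^ (q - 1) := by
  set p := 2 * q - 1
  have hd : 0 ≤ x - y := sub_nonneg.2 hyx
  have hA : 0 ≤ x ^ p - y ^ p := sub_nonneg.2 (rpow_le_rpow hy.le hyx (by linarith))
  have holder := rpow_sub_rpow_le_rpow_sub hy.le hyx (by linarith : 0 ≤ p) (by linarith)
  have mean_value : x ^ p - y ^ p ≤ y ^ (p - 1) * (x - y) :=
    (rpow_sub_rpow_le_mul_sub hy hyx (by linarith) (by linarith)).trans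
      (by gcongr; nlinarith [rpow_nonneg hy.le (p - 1)])
  have hsq : ((x - y) ^ q * y ^ (q - 1)) ^ 2 = (x - y) ^ p * (y ^ (p - 1) * (x - y)) := by
    rw [mul_pow, sq, sq, ← rpow_add' hd (by linarith), ← rpow_add hy,
      show q + q = p + 1 by ring, show q - 1 + (q - 1) = p - 1 by ring,
      rpow_add' hd (by linarith), rpow_one]
    ring
  refine (pow_le_pow_iff_left₀ hA (by positivity) two_ne_zero).1 ?_
  rw [hsq, sq]
  exact mul_le_mul holder mean_value hA (rpow_nonneg hd p)

noncomputable def ryIntegrand (H t s b : ℝ) : ℝ :=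
  b ^ (-(1:ℝ)/2) * ((t + s - b) ^ (2*H - 1) - (t - s + b) ^ (2*H - 1))

lemma RY_eq_integral_ryIntegrand (H : ℝ) {s t : ℝ} (hst : s ≤ t) :
    RY H t s = H * ∫ b in (0:ℝ)..s, ryIntegrand H t s b := by
  have h := integral_comp_sub_left (ryIntegrand H t s) (a := 0) (b := s) s
  rw [sub_self, sub_zero] at h
  rw [RY, min_eq_left hst, max_eq_right hst, ← h]
  congr 1
  refine integral_congr fun a _ => ?_
  simp only [ryIntegrand]
  rw [show t + s - (s - a) = t + a by ring, show t - s + (s - a) = t - a by ring]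

lemma intervalIntegrable_ryIntegrand {H : ℝ} (hH : 1 / 2 ≤ H) (t s u v : ℝ) :
    IntervalIntegrable (ryIntegrand H t s) volume u v := by
  have hp : (0:ℝ) ≤ 2 * H - 1 := by linarith
  refine (intervalIntegrable_rpow' (by norm_num)).mul_continuousOn (ContinuousOn.sub ?_ ?_)
  · exact (continuousOn_const.sub continuousOn_id).rpow_const fun _ _ => Or.inr hp
  · exact (continuousOn_const.add continuousOn_id).rpow_const fun _ _ => Or.inr hp

lemma ryIntegrand_second_difference_le {H s t b : ℝ} (hH1 : 1 / 2 ≤ H) (hH2 : H ≤ 1)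
    (hb : 0 < b) (hbs : b ≤ s) (hst : s ≤ t) :
    ryIntegrand H t t b - 2 * ryIntegrand H t s b + ryIntegrand H s s b
      ≤ 3 * (t - s) ^ H * b ^ (H - 3/2) := by
  set p := 2 * H - 1
  have near_diagonal : (t + t - b) ^ p - (t + s - b) ^ p ≤ (t - s) ^ H * b ^ (H - 1) := by
    have h := rpow_two_mul_sub_one_sub_rpow_le (x := t + t - b) (y := t + s - b)
      (by linarith) (by linarith) hH1 hH2
    rw [show t + t - b - (t + s - b) = t - s by ring] at h
    exact h.trans (mul_le_mul_of_nonneg_left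
      (rpow_le_rpow_of_nonpos hb (by linarith) (by linarith)) (rpow_nonneg (by linarith) _))
  have monotone : (s + s - b) ^ p ≤ (t + s - b) ^ p :=
    rpow_le_rpow (by linarith) (by linarith) (by linarith)
  have near_zero : (t - s + b) ^ p - b ^ p ≤ (t - s) ^ H * b ^ (H - 1) := by
    have h := rpow_two_mul_sub_one_sub_rpow_le hb (by linarith : b ≤ t - s + b) hH1 hH2
    rwa [show t - s + b - b = t - s by ring] at h
  have hb' : b ^ (-(1:ℝ)/2) * b ^ (H - 1) = b ^ (H - 3/2) := by
    rw [← rpow_add hb]; ring_nf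
  calc ryIntegrand H t t b - 2 * ryIntegrand H t s b + ryIntegrand H s s b
      = b ^ (-(1:ℝ)/2) * (((t + t - b) ^ p - (t + s - b) ^ p)
          - ((t + s - b) ^ p - (s + s - b) ^ p) + 2 * ((t - s + b) ^ p - b ^ p)) := by
        simp only [ryIntegrand, sub_self, zero_add]; ring
    _ ≤ b ^ (-(1:ℝ)/2) * (3 * ((t - s) ^ H * b ^ (H - 1))) := by gcongr; linarith
    _ = 3 * (t - s) ^ H * b ^ (H - 3/2) := by rw [← hb']; ring

lemma ryIntegrand_le {H t b : ℝ} (hH : 1 / 2 ≤ H) (hb : 0 ≤ b) (hbt : b ≤ t) :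
    ryIntegrand H t t b ≤ (2 * t) ^ (2*H - 1) * b ^ (-(1:ℝ)/2) := by
  have hp : (0:ℝ) ≤ 2 * H - 1 := by linarith
  have h : (t + t - b) ^ (2*H - 1) - (t - t + b) ^ (2*H - 1) ≤ (2 * t) ^ (2*H - 1) := by
    have := rpow_le_rpow (by linarith) (by linarith : t + t - b ≤ 2 * t) hp
    linarith [rpow_nonneg (by linarith : 0 ≤ t - t + b) (2 * H - 1)]
  rw [ryIntegrand, mul_comm]
  exact mul_le_mul_of_nonneg_right h (rpow_nonneg hb _)

lemma integral_ryIntegrand_second_difference_le {H s t : ℝ} (hH1 : 1 / 2 < H) (hH2 : H ≤ 1)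
    (hs : 0 ≤ s) (hst : s ≤ t) :
    ∫ b in (0:ℝ)..s, (ryIntegrand H t t b - 2 * ryIntegrand H t s b + ryIntegrand H s s b)
      ≤ 3 * (t - s) ^ H * (s ^ (H - 1/2) / (H - 1/2)) := by
  have hI := intervalIntegrable_ryIntegrand hH1.le
  calc _ ≤ ∫ b in (0:ℝ)..s, 3 * (t - s) ^ H * b ^ (H - 3/2) :=
        integral_mono_on_of_le_Ioo hs
          (((hI t t 0 s).sub ((hI t s 0 s).const_mul 2)).add (hI s s 0 s))
          ((intervalIntegrable_rpow' (by linarith)).const_mul _)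
          fun b hb => ryIntegrand_second_difference_le hH1.le hH2 hb.1 hb.2.le hst
    _ = 3 * (t - s) ^ H * (s ^ (H - 1/2) / (H - 1/2)) := by
        rw [intervalIntegral.integral_const_mul, integral_rpow (Or.inl (by linarith)),
          show H - 3/2 + 1 = H - 1/2 by ring, zero_rpow (by linarith), sub_zero]

lemma integral_ryIntegrand_le {H s t : ℝ} (hH : 1 / 2 ≤ H) (hs : 0 ≤ s) (hst : s ≤ t) :
    ∫ b in s..t, ryIntegrand H t t b ≤ 2 * (2 * t) ^ (2*H - 1) * (t - s) ^ (1/2 : ℝ) := by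
  have hsqrt := rpow_sub_rpow_le_rpow_sub hs hst (by norm_num : (0:ℝ) ≤ 1/2) (by norm_num)
  calc _ ≤ ∫ b in s..t, (2 * t) ^ (2*H - 1) * b ^ (-(1:ℝ)/2) :=
        integral_mono_on hst (intervalIntegrable_ryIntegrand hH t t s t)
          ((intervalIntegrable_rpow' (by norm_num)).const_mul _)
          fun b hb => ryIntegrand_le hH (hs.trans hb.1) hb.2
    _ = 2 * (2 * t) ^ (2*H - 1) * (t ^ (1/2 : ℝ) - s ^ (1/2 : ℝ)) := by
        rw [intervalIntegral.integral_const_mul, integral_rpow (Or.inl (by norm_num))]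
        norm_num
        ring
    _ ≤ 2 * (2 * t) ^ (2*H - 1) * (t - s) ^ (1/2 : ℝ) := by
        have := rpow_nonneg (by linarith : 0 ≤ 2 * t) (2 * H - 1)
        gcongr

lemma RY_second_difference_eq {H s t : ℝ} (hH : 1 / 2 ≤ H) (hst : s ≤ t) :
    RY H t t - 2 * RY H t s + RY H s s
      = H * ((∫ b in (0:ℝ)..s,
          (ryIntegrand H t t b - 2 * ryIntegrand H t s b + ryIntegrand H s s b))
        + ∫ b in s..t, ryIntegrand H t t b) := by
  have hI := intervalIntegrable_ryIntegrand hH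
  rw [RY_eq_integral_ryIntegrand H le_rfl, RY_eq_integral_ryIntegrand H hst,
    RY_eq_integral_ryIntegrand H le_rfl,
    ← integral_add_adjacent_intervals (hI t t 0 s) (hI t t s t),
    integral_add ((hI t t 0 s).sub ((hI t s 0 s).const_mul 2)) (hI s s 0 s),
    integral_sub (hI t t 0 s) ((hI t s 0 s).const_mul 2), intervalIntegral.integral_const_mul]
  ring

lemma RY_second_difference_le {H s t : ℝ} (hH1 : 1 / 2 < H) (hH2 : H ≤ 1) (hs : 0 ≤ s)
    (hst : s ≤ t) :
    RY H t t - 2 * RY H t s + RY H s s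
      ≤ H * (3 * (t - s) ^ (H - 1/2) * s ^ (H - 1/2) / (H - 1/2) + 2 * (2 * t) ^ (2*H - 1))
        * (t - s) ^ (1/2 : ℝ) := by
  have hsplit : (t - s) ^ H = (t - s) ^ (H - 1/2) * (t - s) ^ (1/2 : ℝ) := by
    rw [← rpow_add' (by linarith) (by linarith), sub_add_cancel]
  rw [RY_second_difference_eq hH1.le hst]
  calc _ ≤ H * (3 * (t - s) ^ H * (s ^ (H - 1/2) / (H - 1/2))
          + 2 * (2 * t) ^ (2*H - 1) * (t - s) ^ (1/2 : ℝ)) := by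
        gcongr
        · exact integral_ryIntegrand_second_difference_le hH1 hH2 hs hst
        · exact integral_ryIntegrand_le hH1.le hs hst
    _ = _ := by rw [hsplit]; ring

theorem stmt17 (H T : ℝ) (hH1 : 1/2 < H) (hH2 : H < 1) (hT : 0 < T) :
    ∃ C > (0:ℝ), ∀ s t : ℝ, 0 < s → s < t → t ≤ T →
      RY H t t - 2 * RY H t s + RY H s s ≤ C * (t - s) ^ ((1:ℝ)/2) := by
  have hH : 0 < H - 1/2 := by linarith
  refine ⟨H * (3 * T ^ (H - 1/2) * T ^ (H - 1/2) / (H - 1/2) + 2 * (2 * T) ^ (2*H - 1)),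
    by positivity, fun s t hs hst htT => ?_⟩
  refine (RY_second_difference_le hH1 hH2.le hs.le hst.le).trans ?_
  gcongr
  all_goals linarith
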